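/- Continuity bound for conditional Shannon entropy with a binary target (the classical Alicki–Fannes–Winter inequality as applied in the paper): let A be a finite type with exactly two elements and B a finite type. Let ρ and σ be probability mass functions on A × B, and set δ = (1/2)·∑_{(a,b)} |ρ(a,b) − σ(a,b)| (their total variation distance). Then |H_ρ(A | B) − H_σ(A | B)| ≤ δ·log 2 + (1+δ)·h_b(δ/(1+δ)). -/

import Mathlib

/-!
Write `δ` for the total variation distance. Normalising the positive and negative parts of
`ρ - σ` gives pmfs `Δ₁`, `Δ₂` with `ρ + δ Δ₂ = σ + δ Δ₁`, so for `t = δ / (1 + δ)` the mixture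
`ω = (1 - t) ρ + t Δ₂ = (1 - t) σ + t Δ₁` has two decompositions. Conditional entropy is concave,
because each of its terms `p_B(b) η(p(a, b) / p_B(b))` is the perspective of the concave
`η(x) = -x log x`; and by the chain rule `H(A | B) = H(A, B) - H(B)` together with
`η(u + v) ≤ η(u) + η(v)` it is convex up to the additive error `h_b(t)`. Comparing the two
decompositions of `ω` gives `(1 - t) (H_ρ - H_σ) ≤ t (H_{Δ₁} - H_{Δ₂}) + h_b(t) ≤ t log 2 + h_b(t)`;
multiplying by `1 + δ` and exchanging `ρ` and `σ` yields the bound.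
-/

open Finset

/-- Shannon entropy (in nats) of a probability mass function on a finite type,
with the convention `0 · log 0 = 0` (which holds since `Real.log 0 = 0`). -/
noncomputable def entropy {S : Type*} [Fintype S] (p : S → ℝ) : ℝ :=
  ∑ x, -(p x * Real.log (p x))

/-- Conditional Shannon entropy `H_p(A | B)` of a pmf `p` on a product
`A × B`: `∑_b p_B(b) · H(p_{A|B=b})`, where terms with `p_B(b) = 0`
contribute `0` (the factor `p_B(b)` vanishes). -/
noncomputable def condEntropy {A B : Type*} [Fintype A] [Fintype B]
    (p : A × B → ℝ) : ℝ :=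
  ∑ b, (∑ a, p (a, b)) * entropy (fun a => p (a, b) / ∑ a', p (a', b))

/-- Conditional mutual information `I_p(A; B | C)` of a pmf `p` on
`A × B × C`, defined as `H_p(A | C) − H_p(A | B × C)`. -/
noncomputable def cmi {A B C : Type*} [Fintype A] [Fintype B] [Fintype C]
    (p : A × B × C → ℝ) : ℝ :=
  condEntropy (fun ac : A × C => ∑ b, p (ac.1, b, ac.2)) -
    condEntropy (fun abc : A × (B × C) => p (abc.1, abc.2.1, abc.2.2))

/-- Kullback–Leibler divergence (in nats) between two pmfs on a finite type,
with the convention that terms with `p x = 0` contribute `0`. -/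
noncomputable def klDiv {S : Type*} [Fintype S] (p q : S → ℝ) : ℝ :=
  ∑ x, p x * Real.log (p x / q x)

/-- Total variation distance between two pmfs on a finite type. -/
noncomputable def tvDist {S : Type*} [Fintype S] (p q : S → ℝ) : ℝ :=
  (1 / 2) * ∑ x, |p x - q x|

/-- Binary entropy function (in nats), `h_b(x) = −x log x − (1−x) log(1−x)`,
with `h_b(0) = h_b(1) = 0` (automatic since `Real.log 0 = 0`). -/
noncomputable def binEntropy (x : ℝ) : ℝ :=
  -(x * Real.log x) - (1 - x) * Real.log (1 - x)

open Real (negMulLog log)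

-- At `U = 0` this is `0`, as the terms of `condEntropy` with `p_B(b) = 0` are.
noncomputable def perspective (φ : ℝ → ℝ) (u U : ℝ) : ℝ :=
  U * φ (u / U)

theorem perspective_mul_mul (φ : ℝ → ℝ) (c u U : ℝ) :
    perspective φ (c * u) (c * U) = c * perspective φ u U := by
  rcases eq_or_ne c 0 with rfl | hc
  · simp [perspective]
  · rw [perspective, perspective, mul_div_mul_left u U hc, mul_assoc]

theorem ConcaveOn.perspective_add_le_perspective_add {φ : ℝ → ℝ}
    (hφ : ConcaveOn ℝ (Set.Ici 0) φ) {u₁ u₂ U₁ U₂ : ℝ} (hu₁ : 0 ≤ u₁) (hu₂ : 0 ≤ u₂)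
    (hU₁ : 0 ≤ U₁) (hU₂ : 0 ≤ U₂) (h₁ : U₁ = 0 → u₁ = 0) (h₂ : U₂ = 0 → u₂ = 0) :
    perspective φ u₁ U₁ + perspective φ u₂ U₂ ≤ perspective φ (u₁ + u₂) (U₁ + U₂) := by
  rcases hU₁.eq_or_lt with rfl | hU₁
  · simp [perspective, h₁ rfl]
  rcases hU₂.eq_or_lt with rfl | hU₂
  · simp [perspective, h₂ rfl]
  have hU : 0 < U₁ + U₂ := by positivity
  -- `(u₁ + u₂) / (U₁ + U₂)` is the mean of the `uᵢ / Uᵢ` with weights `Uᵢ / (U₁ + U₂)`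
  have key := hφ.2 (Set.mem_Ici.2 (div_nonneg hu₁ hU₁.le)) (Set.mem_Ici.2 (div_nonneg hu₂ hU₂.le))
    (div_nonneg hU₁.le hU.le) (div_nonneg hU₂.le hU.le) (by field_simp)
  have hmix : U₁ / (U₁ + U₂) * (u₁ / U₁) + U₂ / (U₁ + U₂) * (u₂ / U₂) = (u₁ + u₂) / (U₁ + U₂) := by
    field_simp
  simp only [smul_eq_mul, hmix] at key
  calc U₁ * φ (u₁ / U₁) + U₂ * φ (u₂ / U₂)
      = (U₁ + U₂) * (U₁ / (U₁ + U₂) * φ (u₁ / U₁) + U₂ / (U₁ + U₂) * φ (u₂ / U₂)) := by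
        field_simp
    _ ≤ (U₁ + U₂) * φ ((u₁ + u₂) / (U₁ + U₂)) := mul_le_mul_of_nonneg_left key hU.le

theorem perspective_negMulLog {u U : ℝ} (hU : U ≠ 0) :
    perspective negMulLog u U = negMulLog u + u * log U := by
  rw [perspective, div_eq_mul_inv, Real.negMulLog_mul, Real.negMulLog, Real.negMulLog, Real.log_inv]
  field_simp

theorem negMulLog_add_le {u v : ℝ} (hu : 0 ≤ u) (hv : 0 ≤ v) :
    negMulLog (u + v) ≤ negMulLog u + negMulLog v := by
  rcases hu.eq_or_lt with rfl | hu
  · simp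
  rcases hv.eq_or_lt with rfl | hv
  · simp
  have hlu : log u ≤ log (u + v) := Real.log_le_log hu (by linarith)
  have hlv : log v ≤ log (u + v) := Real.log_le_log hv (by linarith)
  simp only [Real.negMulLog, neg_mul]
  nlinarith [mul_le_mul_of_nonneg_left hlu hu.le, mul_le_mul_of_nonneg_left hlv hv.le]

theorem binEntropy_eq_negMulLog_add (t : ℝ) : binEntropy t = negMulLog t + negMulLog (1 - t) := by
  simp only [binEntropy, Real.negMulLog]
  ring

section Entropy

variable {S : Type*} [Fintype S]

theorem entropy_eq_sum_negMulLog (p : S → ℝ) : entropy p = ∑ x, negMulLog (p x) := by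
  simp [entropy, Real.negMulLog_eq_neg]

theorem entropy_nonneg {p : S → ℝ} (h₀ : ∀ x, 0 ≤ p x) (h₁ : ∀ x, p x ≤ 1) : 0 ≤ entropy p := by
  rw [entropy_eq_sum_negMulLog]
  exact sum_nonneg fun x _ => Real.negMulLog_nonneg (h₀ x) (h₁ x)

theorem entropy_le_log_card {p : S → ℝ} (hp : p ∈ stdSimplex ℝ S) :
    entropy p ≤ log (Fintype.card S) := by
  have hn : (0 : ℝ) < Fintype.card S := by
    have : Nonempty S := by
      by_contra h
      simpa [not_nonempty_iff.1 h] using hp.2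
    exact_mod_cast Fintype.card_pos
  have jensen := Real.concaveOn_negMulLog.le_map_sum (t := univ)
    (w := fun _ => (Fintype.card S : ℝ)⁻¹) (p := p) (fun _ _ => by positivity) (by simp [hn.ne']) (fun x _ => hp.1 x)
  simp only [smul_eq_mul, ← mul_sum, hp.2, mul_one] at jensen
  rw [entropy_eq_sum_negMulLog]
  calc ∑ x, negMulLog (p x) = Fintype.card S * ((Fintype.card S : ℝ)⁻¹ * ∑ x, negMulLog (p x)) := by
        field_simp
    _ ≤ Fintype.card S * negMulLog (Fintype.card S : ℝ)⁻¹ := by gcongr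
    _ = log (Fintype.card S) := by
        rw [Real.negMulLog, Real.log_inv]
        field_simp

theorem le_entropy_mix {p q : S → ℝ} (hp : ∀ x, 0 ≤ p x) (hq : ∀ x, 0 ≤ q x)
    {t : ℝ} (ht₀ : 0 ≤ t) (ht₁ : t ≤ 1) :
    (1 - t) * entropy p + t * entropy q ≤ entropy (fun x => (1 - t) * p x + t * q x) := by
  simp only [entropy_eq_sum_negMulLog, mul_sum, ← sum_add_distrib]
  exact sum_le_sum fun x _ => Real.concaveOn_negMulLog.2 (hp x) (hq x) (by linarith) ht₀ (by ring)

theorem entropy_mix_le {p q : S → ℝ} (hp : p ∈ stdSimplex ℝ S) (hq : q ∈ stdSimplex ℝ S)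
    {t : ℝ} (ht₀ : 0 ≤ t) (ht₁ : t ≤ 1) :
    entropy (fun x => (1 - t) * p x + t * q x) ≤
      (1 - t) * entropy p + t * entropy q + binEntropy t := by
  have hsplit : ∀ x, negMulLog ((1 - t) * p x + t * q x) ≤
      (1 - t) * negMulLog (p x) + t * negMulLog (q x) +
        (p x * negMulLog (1 - t) + q x * negMulLog t) := fun x => by
    refine (negMulLog_add_le (mul_nonneg (by linarith) (hp.1 x)) (mul_nonneg ht₀ (hq.1 x))).trans ?_
    rw [Real.negMulLog_mul, Real.negMulLog_mul]
    linarith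
  calc entropy (fun x => (1 - t) * p x + t * q x)
      ≤ ∑ x, ((1 - t) * negMulLog (p x) + t * negMulLog (q x) +
          (p x * negMulLog (1 - t) + q x * negMulLog t)) := by
        rw [entropy_eq_sum_negMulLog]
        exact sum_le_sum fun x _ => hsplit x
    _ = (1 - t) * entropy p + t * entropy q + binEntropy t := by
        simp only [sum_add_distrib, ← mul_sum, ← sum_mul, hp.2, hq.2, entropy_eq_sum_negMulLog,
          binEntropy_eq_negMulLog_add]
        ring

end Entropy

section CondEntropy

variable {A B : Type*} [Fintype A]

def marginal (p : A × B → ℝ) (b : B) : ℝ :=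
  ∑ a, p (a, b)

theorem marginal_nonneg {p : A × B → ℝ} (hp : ∀ x, 0 ≤ p x) (b : B) : 0 ≤ marginal p b :=
  sum_nonneg fun a _ => hp (a, b)

theorem le_marginal {p : A × B → ℝ} (hp : ∀ x, 0 ≤ p x) (a : A) (b : B) :
    p (a, b) ≤ marginal p b :=
  single_le_sum (f := fun a => p (a, b)) (fun a _ => hp (a, b)) (mem_univ a)

theorem marginal_mix (p q : A × B → ℝ) (t : ℝ) :
    marginal (fun x => (1 - t) * p x + t * q x) =
      fun b => (1 - t) * marginal p b + t * marginal q b := by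
  ext b
  simp only [marginal, sum_add_distrib, mul_sum]

variable [Fintype B]

theorem sum_marginal (p : A × B → ℝ) : ∑ b, marginal p b = ∑ x, p x :=
  (Fintype.sum_prod_type_right p).symm

theorem condEntropy_eq_sum_perspective (p : A × B → ℝ) :
    condEntropy p = ∑ b, ∑ a, perspective negMulLog (p (a, b)) (marginal p b) := by
  simp [condEntropy, marginal, perspective, entropy_eq_sum_negMulLog, mul_sum]

theorem condEntropy_eq_entropy_sub {p : A × B → ℝ} (hp : ∀ x, 0 ≤ p x) :
    condEntropy p = entropy p - entropy (marginal p) := by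
  have hcol : ∀ b, ∑ a, perspective negMulLog (p (a, b)) (marginal p b) =
      ∑ a, negMulLog (p (a, b)) - negMulLog (marginal p b) := fun b => by
    rcases (marginal_nonneg hp b).eq_or_lt with h | h
    · have hzero : ∀ a, p (a, b) = 0 := fun a =>
        le_antisymm (h ▸ le_marginal hp a b) (hp (a, b))
      simp [perspective, ← h, hzero]
    · simp only [perspective_negMulLog h.ne', sum_add_distrib, ← sum_mul]
      rw [Real.negMulLog]
      simp only [marginal]
      ring
  rw [condEntropy_eq_sum_perspective, sum_congr rfl fun b _ => hcol b, sum_sub_distrib,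
    entropy_eq_sum_negMulLog, entropy_eq_sum_negMulLog, Fintype.sum_prod_type_right]

theorem condEntropy_nonneg {p : A × B → ℝ} (hp : ∀ x, 0 ≤ p x) : 0 ≤ condEntropy p :=
  sum_nonneg fun b _ => mul_nonneg (marginal_nonneg hp b) <|
    entropy_nonneg (fun a => div_nonneg (hp (a, b)) (marginal_nonneg hp b))
      (fun a => div_le_one_of_le₀ (le_marginal hp a b) (marginal_nonneg hp b))

theorem condEntropy_le_log_card {p : A × B → ℝ} (hp : p ∈ stdSimplex ℝ (A × B)) :
    condEntropy p ≤ log (Fintype.card A) := by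
  have hcol : ∀ b, marginal p b * entropy (fun a => p (a, b) / marginal p b) ≤
      marginal p b * log (Fintype.card A) := fun b => by
    rcases (marginal_nonneg hp.1 b).eq_or_lt with h | h
    · simp [← h]
    · refine mul_le_mul_of_nonneg_left (entropy_le_log_card ⟨fun a => ?_, ?_⟩) h.le
      · exact div_nonneg (hp.1 (a, b)) h.le
      · rw [← sum_div]
        exact div_self h.ne'
  calc condEntropy p ≤ ∑ b, marginal p b * log (Fintype.card A) := sum_le_sum fun b _ => hcol b
    _ = log (Fintype.card A) := by rw [← sum_mul, sum_marginal, hp.2, one_mul]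

theorem le_condEntropy_mix {p q : A × B → ℝ} (hp : ∀ x, 0 ≤ p x) (hq : ∀ x, 0 ≤ q x)
    {t : ℝ} (ht₀ : 0 ≤ t) (ht₁ : t ≤ 1) :
    (1 - t) * condEntropy p + t * condEntropy q ≤
      condEntropy (fun x => (1 - t) * p x + t * q x) := by
  have h₀ : 0 ≤ 1 - t := by linarith
  have hnull : ∀ {r : A × B → ℝ}, (∀ x, 0 ≤ r x) → ∀ {c : ℝ} (a : A) (b : B),
      c * marginal r b = 0 → c * r (a, b) = 0 := fun hr c a b h => by
    rcases mul_eq_zero.1 h with hc | hm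
    · simp [hc]
    · simp [le_antisymm (hm ▸ le_marginal hr a b) (hr (a, b))]
  simp only [condEntropy_eq_sum_perspective, marginal_mix, mul_sum, ← sum_add_distrib,
    ← perspective_mul_mul]
  exact sum_le_sum fun b _ => sum_le_sum fun a _ =>
    Real.concaveOn_negMulLog.perspective_add_le_perspective_add
      (mul_nonneg h₀ (hp _)) (mul_nonneg ht₀ (hq _))
      (mul_nonneg h₀ (marginal_nonneg hp b)) (mul_nonneg ht₀ (marginal_nonneg hq b))
      (hnull hp a b) (hnull hq a b)

theorem condEntropy_mix_le {p q : A × B → ℝ} (hp : p ∈ stdSimplex ℝ (A × B))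
    (hq : q ∈ stdSimplex ℝ (A × B)) {t : ℝ} (ht₀ : 0 ≤ t) (ht₁ : t ≤ 1) :
    condEntropy (fun x => (1 - t) * p x + t * q x) ≤
      (1 - t) * condEntropy p + t * condEntropy q + binEntropy t := by
  have hmix : ∀ x, 0 ≤ (1 - t) * p x + t * q x := fun x =>
    add_nonneg (mul_nonneg (by linarith) (hp.1 x)) (mul_nonneg ht₀ (hq.1 x))
  have hjoint := entropy_mix_le hp hq ht₀ ht₁
  have hmarg := le_entropy_mix (marginal_nonneg hp.1) (marginal_nonneg hq.1) ht₀ ht₁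
  rw [condEntropy_eq_entropy_sub hmix, condEntropy_eq_entropy_sub hp.1,
    condEntropy_eq_entropy_sub hq.1, marginal_mix]
  linarith

end CondEntropy

section TotalVariation

variable {S : Type*} [Fintype S]

theorem tvDist_nonneg (p q : S → ℝ) : 0 ≤ tvDist p q := by
  unfold tvDist
  positivity

theorem tvDist_comm (p q : S → ℝ) : tvDist p q = tvDist q p := by
  simp only [tvDist, abs_sub_comm]

theorem eq_of_tvDist_eq_zero {p q : S → ℝ} (h : tvDist p q = 0) : p = q := by
  have hsum : ∑ x, |p x - q x| = 0 := by
    unfold tvDist at h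
    linarith
  funext x
  have := (sum_eq_zero_iff_of_nonneg fun x _ => abs_nonneg (p x - q x)).1 hsum x (mem_univ x)
  linarith [abs_eq_zero.1 this]

theorem sum_posPart_sub_eq_tvDist {p q : S → ℝ} (h : ∑ x, p x = ∑ x, q x) :
    ∑ x, (p x - q x)⁺ = tvDist p q := by
  have hdiff : ∑ x, (p x - q x)⁺ - ∑ x, (p x - q x)⁻ = 0 := by
    rw [← sum_sub_distrib]
    simp only [posPart_sub_negPart]
    rw [sum_sub_distrib, h, sub_self]
  have habs : ∑ x, (p x - q x)⁺ + ∑ x, (p x - q x)⁻ = 2 * tvDist p q := by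
    simp only [← sum_add_distrib, posPart_add_negPart, tvDist]
    ring
  linarith

theorem sum_negPart_sub_eq_tvDist {p q : S → ℝ} (h : ∑ x, p x = ∑ x, q x) :
    ∑ x, (p x - q x)⁻ = tvDist p q := by
  simpa only [← posPart_neg, neg_sub, tvDist_comm q p] using sum_posPart_sub_eq_tvDist h.symm

theorem exists_add_tvDist_mul_eq {p q : S → ℝ} (hp : p ∈ stdSimplex ℝ S) (hq : q ∈ stdSimplex ℝ S) :
    ∃ Δ₁ ∈ stdSimplex ℝ S, ∃ Δ₂ ∈ stdSimplex ℝ S,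
      ∀ x, p x + tvDist p q * Δ₂ x = q x + tvDist p q * Δ₁ x := by
  have hmass : ∑ x, p x = ∑ x, q x := by rw [hp.2, hq.2]
  rcases (tvDist_nonneg p q).eq_or_lt with hδ | hδ
  · refine ⟨p, hp, p, hp, fun x => ?_⟩
    rw [← hδ, eq_of_tvDist_eq_zero hδ.symm]
  refine ⟨fun x => (p x - q x)⁺ / tvDist p q, ⟨fun x => by positivity, ?_⟩,
    fun x => (p x - q x)⁻ / tvDist p q, ⟨fun x => by positivity, ?_⟩, fun x => ?_⟩
  · rw [← sum_div, sum_posPart_sub_eq_tvDist hmass, div_self hδ.ne']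
  · rw [← sum_div, sum_negPart_sub_eq_tvDist hmass, div_self hδ.ne']
  · rw [mul_div_cancel₀ _ hδ.ne', mul_div_cancel₀ _ hδ.ne']
    linarith [posPart_sub_negPart (p x - q x)]

end TotalVariation

theorem condEntropy_sub_le_of_add_mul_eq {A B : Type*} [Fintype A] [Fintype B]
    {p q Δ₁ Δ₂ : A × B → ℝ} (hp : ∀ x, 0 ≤ p x) (hq : q ∈ stdSimplex ℝ (A × B))
    (hΔ₁ : Δ₁ ∈ stdSimplex ℝ (A × B)) (hΔ₂ : ∀ x, 0 ≤ Δ₂ x) {δ : ℝ} (hδ : 0 ≤ δ)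
    (h : ∀ x, p x + δ * Δ₂ x = q x + δ * Δ₁ x) :
    condEntropy p - condEntropy q ≤
      δ * log (Fintype.card A) + (1 + δ) * binEntropy (δ / (1 + δ)) := by
  set t := δ / (1 + δ)
  have hδ₁ : 0 < 1 + δ := by linarith
  have ht₀ : 0 ≤ t := by positivity
  have ht₁ : t ≤ 1 := by rw [div_le_one hδ₁]; linarith
  have htδ : (1 + δ) * t = δ := mul_div_cancel₀ δ hδ₁.ne'
  have hcompl : (1 + δ) * (1 - t) = 1 := by linarith
  have hsame : (fun x => (1 - t) * p x + t * Δ₂ x) = fun x => (1 - t) * q x + t * Δ₁ x := by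
    funext x
    refine mul_left_cancel₀ hδ₁.ne' ?_
    linear_combination h x + (p x - q x) * hcompl + (Δ₂ x - Δ₁ x) * htδ
  have hconcave := le_condEntropy_mix hp hΔ₂ ht₀ ht₁
  have hconvex := condEntropy_mix_le hq hΔ₁ ht₀ ht₁
  rw [hsame] at hconcave
  have hΔ₁_le := mul_le_mul_of_nonneg_left (condEntropy_le_log_card hΔ₁) ht₀
  have hΔ₂_nonneg := mul_nonneg ht₀ (condEntropy_nonneg hΔ₂)
  have hscaled : (1 - t) * (condEntropy p - condEntropy q) ≤
      t * log (Fintype.card A) + binEntropy t := by linarith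
  calc condEntropy p - condEntropy q = (1 + δ) * ((1 - t) * (condEntropy p - condEntropy q)) := by
        rw [← mul_assoc, hcompl, one_mul]
    _ ≤ (1 + δ) * (t * log (Fintype.card A) + binEntropy t) := by gcongr
    _ = δ * log (Fintype.card A) + (1 + δ) * binEntropy t := by
        rw [mul_add, ← mul_assoc, htδ]

/-- **Alicki–Fannes–Winter continuity bound for conditional entropy with a
binary target.**  Let `A` be binary, `ρ, σ` pmfs on `A × B`, and
`δ = δ(ρ, σ)` their total variation distance.  Then
`|H_ρ(A | B) − H_σ(A | B)| ≤ δ · log 2 + (1+δ) · h_b(δ/(1+δ))`. -/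
theorem afw_condEntropy_continuity
    {A B : Type*} [Fintype A] [Fintype B] (hA : Fintype.card A = 2)
    (ρ σ : A × B → ℝ)
    (hρ : ∀ x, 0 ≤ ρ x) (hρsum : ∑ x, ρ x = 1)
    (hσ : ∀ x, 0 ≤ σ x) (hσsum : ∑ x, σ x = 1) :
    |condEntropy ρ - condEntropy σ| ≤
      tvDist ρ σ * Real.log 2 +
        (1 + tvDist ρ σ) * binEntropy (tvDist ρ σ / (1 + tvDist ρ σ)) := by
  obtain ⟨Δ₁, hΔ₁, Δ₂, hΔ₂, hmix⟩ := exists_add_tvDist_mul_eq ⟨hρ, hρsum⟩ ⟨hσ, hσsum⟩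
  have hlog : Real.log 2 = log (Fintype.card A) := by rw [hA, Nat.cast_ofNat]
  rw [abs_sub_le_iff, hlog]
  exact ⟨condEntropy_sub_le_of_add_mul_eq hρ ⟨hσ, hσsum⟩ hΔ₁ hΔ₂.1 (tvDist_nonneg ρ σ) hmix,
    condEntropy_sub_le_of_add_mul_eq hσ ⟨hρ, hρsum⟩ hΔ₂ hΔ₁.1 (tvDist_nonneg ρ σ)
      fun x => (hmix x).symm⟩
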